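/- Let A be an invertible 2×2 complex matrix and define L(A) = T (A ⊗ A̅) T† / |det(A)|, where T = (1/√2) · !![1,0,0,1; 0,1,1,0; 0,I,-I,0; 1,0,0,-1] and A̅ is the entrywise complex conjugate of A. Then L(A) has real entries and is a proper orthochronous Lorentz transformation: L(A) M L(A)ᵀ = M, det(L(A)) = 1, and the (0,0) entry of L(A) is positive. -/

import Mathlib

open Matrix Complex Kronecker
open scoped ComplexOrder

noncomputable section

/-- The Pauli matrix σ₀ (the 2×2 identity). -/
def pauli0 : Matrix (Fin 2) (Fin 2) ℂ := 1
/-- The Pauli matrix σ₁. -/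
def pauli1 : Matrix (Fin 2) (Fin 2) ℂ := !![0, 1; 1, 0]
/-- The Pauli matrix σ₂. -/
def pauli2 : Matrix (Fin 2) (Fin 2) ℂ := !![0, -I; I, 0]
/-- The Pauli matrix σ₃. -/
def pauli3 : Matrix (Fin 2) (Fin 2) ℂ := !![1, 0; 0, -1]

/-- The four Pauli matrices. -/
def pauli : Fin 4 → Matrix (Fin 2) (Fin 2) ℂ := ![pauli0, pauli1, pauli2, pauli3]

/-- Kronecker product of two 2×2 complex matrices as a 4×4 matrix, with
entry `(2i+j, 2k+l)` equal to `A i k * B j l`. -/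
def kron (A B : Matrix (Fin 2) (Fin 2) ℂ) : Matrix (Fin 4) (Fin 4) ℂ :=
  Matrix.reindex finProdFinEquiv finProdFinEquiv (A ⊗ₖ B)

/-- The Lorentz metric matrix `diag(1,-1,-1,-1)`. -/
def Mmetric : Matrix (Fin 4) (Fin 4) ℝ := Matrix.diagonal ![1, -1, -1, -1]

/-- A real 4×4 matrix is a proper orthochronous Lorentz transformation if
`L M Lᵀ = M`, `det L = 1` and `L₀₀ > 0`. -/
def IsProperOrthochronousLorentz (L : Matrix (Fin 4) (Fin 4) ℝ) : Prop :=
  L * Mmetric * Lᵀ = Mmetric ∧ L.det = 1 ∧ 0 < L 0 0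

/-- The matrix `T` transforming the density-matrix picture to the `R`-picture. -/
def Tmat : Matrix (Fin 4) (Fin 4) ℂ :=
  ((Real.sqrt 2 : ℂ))⁻¹ • !![1, 0, 0, 1; 0, 1, 1, 0; 0, I, -I, 0; 1, 0, 0, -1]

/-- The real parameterization `R(ρ)ᵢⱼ = Tr(ρ (σᵢ ⊗ σⱼ))` of a 4×4 matrix. -/
def Rmat (ρ : Matrix (Fin 4) (Fin 4) ℂ) : Matrix (Fin 4) (Fin 4) ℂ :=
  fun i j => Matrix.trace (ρ * kron (pauli i) (pauli j))

/-- The Lorentz transformation `L(A) = T (A ⊗ A̅) T† / |det A|` associated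
with a 2×2 matrix `A`. -/
def Lmat (A : Matrix (Fin 2) (Fin 2) ℂ) : Matrix (Fin 4) (Fin 4) ℂ :=
  (((‖A.det‖ : ℝ) : ℂ))⁻¹ • (Tmat * kron A (A.map (starRingEnd ℂ)) * Tmatᴴ)

/-- The singular values of a 4×4 complex matrix: the nonnegative square roots of
the eigenvalues of `Mᴴ M`. -/
def singularValues (M : Matrix (Fin 4) (Fin 4) ℂ) : Fin 4 → ℝ :=
  fun i => Real.sqrt ((Matrix.isHermitian_conjTranspose_mul_self M).eigenvalues i)

/-- The multiset of singular values of a 4×4 complex matrix. -/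
def singularValuesMultiset (M : Matrix (Fin 4) (Fin 4) ℂ) : Multiset ℝ :=
  Finset.univ.val.map (singularValues M)

/-- The square root of a positive semidefinite matrix, as `Matrix.PosSemidef.sqrt` was
defined in older Mathlib. -/
def psdSqrt {ρ : Matrix (Fin 4) (Fin 4) ℂ} (h : ρ.PosSemidef) : Matrix (Fin 4) (Fin 4) ℂ :=
  (h.1.eigenvectorUnitary : Matrix (Fin 4) (Fin 4) ℂ) *
    Matrix.diagonal ((↑) ∘ Real.sqrt ∘ h.1.eigenvalues) *
    (star h.1.eigenvectorUnitary : Matrix (Fin 4) (Fin 4) ℂ)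

open scoped Classical in
/-- The concurrence of a two-qubit state `ρ`:
`max (0, τ₁ - τ₂ - τ₃ - τ₄) = max (0, 2 max τᵢ - ∑ τᵢ)` where the `τᵢ` are the
singular values of `Xᵀ (σ₂ ⊗ σ₂) X` with `ρ = X Xᴴ` (here `X = √ρ`). -/
def concurrence (ρ : Matrix (Fin 4) (Fin 4) ℂ) : ℝ :=
  if h : ρ.PosSemidef then
    let τ := singularValues ((psdSqrt h)ᵀ * kron pauli2 pauli2 * psdSqrt h)
    max 0 (2 * Finset.univ.sup' Finset.univ_nonempty τ - ∑ i, τ i)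
  else 0

/-- A two-qubit density matrix: positive semidefinite with trace 1. -/
def IsDensityMatrix (ρ : Matrix (Fin 4) (Fin 4) ℂ) : Prop :=
  ρ.PosSemidef ∧ ρ.trace = 1

/-- The reshuffled matrix `X̃` with `X̃_{2k+l,2k'+l'} = X_{2k+k',2l+l'}`. -/
def reshuffle (X : Matrix (Fin 4) (Fin 4) ℂ) : Matrix (Fin 4) (Fin 4) ℂ :=
  fun i j =>
    X ⟨2 * (i.val / 2) + j.val / 2, by have := i.isLt; have := j.isLt; omega⟩
      ⟨2 * (i.val % 2) + j.val % 2, by have := i.isLt; have := j.isLt; omega⟩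

/-- The partial transpose on the second qubit:
`(ρ^PT)_{2i+j,2k+l} = ρ_{2i+l,2k+j}`. -/
def ptranspose (ρ : Matrix (Fin 4) (Fin 4) ℂ) : Matrix (Fin 4) (Fin 4) ℂ :=
  fun a b =>
    ρ ⟨2 * (a.val / 2) + b.val % 2, by have := a.isLt; have := b.isLt; omega⟩
      ⟨2 * (b.val / 2) + a.val % 2, by have := a.isLt; have := b.isLt; omega⟩


-- ==== auxiliary ====
namespace LorentzAux

def eps : Matrix (Fin 2) (Fin 2) ℂ := !![0, 1; -1, 0]
def T0 : Matrix (Fin 4) (Fin 4) ℂ := !![1, 0, 0, 1; 0, 1, 1, 0; 0, I, -I, 0; 1, 0, 0, -1]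
def Pswap : Matrix (Fin 4) (Fin 4) ℂ := !![1,0,0,0; 0,0,1,0; 0,1,0,0; 0,0,0,1]
def McX : Matrix (Fin 4) (Fin 4) ℂ := Mmetric.map Complex.ofReal

lemma kron_eq (A B : Matrix (Fin 2) (Fin 2) ℂ) : kron A B =
    !![A 0 0*B 0 0, A 0 0*B 0 1, A 0 1*B 0 0, A 0 1*B 0 1;
       A 0 0*B 1 0, A 0 0*B 1 1, A 0 1*B 1 0, A 0 1*B 1 1;
       A 1 0*B 0 0, A 1 0*B 0 1, A 1 1*B 0 0, A 1 1*B 0 1;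
       A 1 0*B 1 0, A 1 0*B 1 1, A 1 1*B 1 0, A 1 1*B 1 1] := by
  ext i j
  fin_cases i <;> fin_cases j <;>
    simp [kron, Matrix.reindex_apply, Matrix.submatrix_apply, finProdFinEquiv,
      Fin.divNat, Fin.modNat, Matrix.kroneckerMap_apply] <;> rfl

lemma kron_mul (A B C D : Matrix (Fin 2) (Fin 2) ℂ) :
    kron A B * kron C D = kron (A * C) (B * D) := by
  simp only [kron, Matrix.reindex_apply, Matrix.submatrix_mul_equiv,
    Matrix.mul_kronecker_mul]

lemma kron_det (A B : Matrix (Fin 2) (Fin 2) ℂ) :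
    (kron A B).det = A.det ^ 2 * B.det ^ 2 := by
  simp [kron, Matrix.det_reindex_self, Matrix.det_kronecker]

lemma kron_transpose (A B : Matrix (Fin 2) (Fin 2) ℂ) :
    (kron A B)ᵀ = kron Aᵀ Bᵀ := by
  simp only [kron, Matrix.reindex_apply, Matrix.transpose_submatrix,
    Matrix.kroneckerMap_transpose]

lemma kron_map (A B : Matrix (Fin 2) (Fin 2) ℂ) :
    (kron A B).map (starRingEnd ℂ) = kron (A.map (starRingEnd ℂ)) (B.map (starRingEnd ℂ)) := by
  simp only [kron, Matrix.reindex_apply, ← Matrix.submatrix_map]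
  rw [Matrix.kroneckerMap_map]
  simp only [_root_.map_mul]
  rfl

lemma kron_smul_left (x : ℂ) (A B : Matrix (Fin 2) (Fin 2) ℂ) :
    kron (x • A) B = x • kron A B := by
  rw [kron_eq, kron_eq]
  ext i j
  fin_cases i <;> fin_cases j <;> simp [Matrix.vecHead, Matrix.vecTail] <;> ring

lemma kron_smul_right (x : ℂ) (A B : Matrix (Fin 2) (Fin 2) ℂ) :
    kron A (x • B) = x • kron A B := by
  rw [kron_eq, kron_eq]
  ext i j
  fin_cases i <;> fin_cases j <;> simp [Matrix.vecHead, Matrix.vecTail] <;> ring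

lemma eps_conj (A : Matrix (Fin 2) (Fin 2) ℂ) : A * eps * Aᵀ = A.det • eps := by
  ext i j
  fin_cases i <;> fin_cases j <;>
    simp [eps, Matrix.mul_apply, Fin.sum_univ_two, Matrix.vecHead, Matrix.vecTail, Matrix.det_fin_two] <;> ring

lemma McX_eq : McX = !![1,0,0,0; 0,-1,0,0; 0,0,-1,0; 0,0,0,-1] := by
  ext i j
  fin_cases i <;> fin_cases j <;>
    (simp [McX, Mmetric, Matrix.diagonal, Matrix.map_apply]; try rfl)

lemma key1 : T0ᴴ * McX * (T0.map (starRingEnd ℂ)) = (2:ℂ) • kron eps eps := by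
  rw [McX_eq, kron_eq]
  ext i j
  fin_cases i <;> fin_cases j <;>
    simp [T0, eps, Matrix.mul_apply, Fin.sum_univ_four, Matrix.vecHead, Matrix.vecTail, Matrix.conjTranspose_apply,
      Matrix.map_apply] <;> ring

lemma key2 : T0 * kron eps eps * T0ᵀ = (2:ℂ) • McX := by
  rw [McX_eq, kron_eq]
  ext i j
  fin_cases i <;> fin_cases j <;>
    (simp [T0, eps, Matrix.mul_apply, Fin.sum_univ_four, Matrix.vecHead, Matrix.vecTail]; try ring_nf) <;>
      (try simp [Complex.I_sq]) <;> (try ring) <;> (try rfl)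

lemma T0_conj : T0.map (starRingEnd ℂ) = T0 * Pswap := by
  ext i j
  fin_cases i <;> fin_cases j <;>
    (simp [T0, Pswap, Matrix.mul_apply, Fin.sum_univ_four, Matrix.vecHead, Matrix.vecTail, Matrix.map_apply]; try rfl)

lemma Pswap_sq : Pswap * Pswap = 1 := by
  ext i j
  fin_cases i <;> fin_cases j <;>
    (simp [Pswap, Matrix.mul_apply, Fin.sum_univ_four, Matrix.vecHead, Matrix.vecTail, Matrix.one_apply]; try rfl)

lemma Pswap_transpose : Pswapᵀ = Pswap := by
  ext i j
  fin_cases i <;> fin_cases j <;> (simp [Pswap]; try rfl)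

lemma Pswap_kron (X Y : Matrix (Fin 2) (Fin 2) ℂ) :
    Pswap * kron X Y * Pswap = kron Y X := by
  rw [kron_eq X Y, kron_eq Y X]
  ext i j
  fin_cases i <;> fin_cases j <;>
    (simp [Pswap, Matrix.mul_apply, Fin.sum_univ_four, Matrix.vecHead, Matrix.vecTail]; try rfl) <;> ring

lemma T0_det : T0.det = 4 * I := by
  norm_num [T0, Matrix.det_succ_row_zero, Fin.sum_univ_succ, Matrix.vecHead, Matrix.vecTail]
  simp [Fin.castSucc]
  ring_nf

lemma star_c : star ((Real.sqrt 2 : ℂ))⁻¹ = ((Real.sqrt 2 : ℂ))⁻¹ := by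
  rw [star_inv₀, Complex.star_def, Complex.conj_ofReal]

lemma cc : ((Real.sqrt 2 : ℂ))⁻¹ * ((Real.sqrt 2 : ℂ))⁻¹ = 2⁻¹ := by
  have h : ((Real.sqrt 2 : ℂ)) * ((Real.sqrt 2 : ℂ)) = 2 := by
    rw [← Complex.ofReal_mul, Real.mul_self_sqrt (by norm_num)]
    norm_num
  rw [← mul_inv, h]

lemma Tmat_smul : Tmat = ((Real.sqrt 2 : ℂ))⁻¹ • T0 := rfl

lemma map_smul_conj (x : ℂ) (M : Matrix (Fin 4) (Fin 4) ℂ) :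
    (x • M).map (starRingEnd ℂ) = (starRingEnd ℂ x) • M.map (starRingEnd ℂ) := by
  ext i j; simp

lemma ct_t (M : Matrix (Fin 4) (Fin 4) ℂ) : (Mᴴ)ᵀ = M.map (starRingEnd ℂ) := by
  ext i j; simp [Matrix.conjTranspose_apply, Matrix.map_apply]

lemma ctmap (M : Matrix (Fin 4) (Fin 4) ℂ) : Mᴴ.map (starRingEnd ℂ) = Mᵀ := by
  ext i j; simp [Matrix.conjTranspose_apply, Matrix.map_apply]

lemma t_map_conj (M : Matrix (Fin 4) (Fin 4) ℂ) : (M.map (starRingEnd ℂ))ᵀ = Mᴴ := by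
  ext i j; simp [Matrix.conjTranspose_apply, Matrix.map_apply]

lemma Tmat_conj : Tmat.map (starRingEnd ℂ) = Tmat * Pswap := by
  rw [Tmat_smul, map_smul_conj, Matrix.smul_mul, T0_conj]
  congr 1
  exact star_c

lemma sandwich1 (Y : Matrix (Fin 4) (Fin 4) ℂ) :
    Tmat * Y * Tmatᴴ = (2:ℂ)⁻¹ • (T0 * Y * T0ᴴ) := by
  rw [Tmat_smul, Matrix.conjTranspose_smul, star_c]
  simp only [Matrix.smul_mul, Matrix.mul_smul, smul_smul, cc]

lemma sandwich2 (Y : Matrix (Fin 4) (Fin 4) ℂ) :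
    Tmat * Y * Tmatᵀ = (2:ℂ)⁻¹ • (T0 * Y * T0ᵀ) := by
  rw [Tmat_smul, Matrix.transpose_smul]
  simp only [Matrix.smul_mul, Matrix.mul_smul, smul_smul, cc]

lemma sandwich3 (Y : Matrix (Fin 4) (Fin 4) ℂ) :
    Tmatᴴ * Y * Tmat.map (starRingEnd ℂ) =
      (2:ℂ)⁻¹ • (T0ᴴ * Y * T0.map (starRingEnd ℂ)) := by
  rw [Tmat_smul, Matrix.conjTranspose_smul, star_c, map_smul_conj]
  have h2 : starRingEnd ℂ ((Real.sqrt 2 : ℂ))⁻¹ = ((Real.sqrt 2 : ℂ))⁻¹ := star_c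
  rw [h2]
  simp only [Matrix.smul_mul, Matrix.mul_smul, smul_smul, cc]

lemma Tmat_det : Tmat.det = I := by
  rw [Tmat_smul, Matrix.det_smul, T0_det]
  have h4 : ((Real.sqrt 2 : ℂ))⁻¹ ^ Fintype.card (Fin 4) = 4⁻¹ := by
    rw [show Fintype.card (Fin 4) = 4 from rfl,
      show (((Real.sqrt 2:ℂ))⁻¹)^4 = (((Real.sqrt 2:ℂ))⁻¹ * ((Real.sqrt 2:ℂ))⁻¹) *
        (((Real.sqrt 2:ℂ))⁻¹ * ((Real.sqrt 2:ℂ))⁻¹) from by ring, cc]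
    norm_num
  rw [h4]
  ring

end LorentzAux


open LorentzAux in
/-- `L(A) = T (A ⊗ A̅) T† / |det A|` is a real matrix which is a
proper orthochronous Lorentz transformation. -/
theorem Lmat_is_lorentz (A : Matrix (Fin 2) (Fin 2) ℂ) (hA : IsUnit A) :
    ∃ L : Matrix (Fin 4) (Fin 4) ℝ,
      Lmat A = L.map Complex.ofReal ∧ IsProperOrthochronousLorentz L := by
  classical
  have hdet : A.det ≠ 0 := ((Matrix.isUnit_iff_isUnit_det A).mp hA).ne_zero
  set a : ℝ := ‖A.det‖ with ha_def
  have ha0 : 0 < a := norm_pos_iff.mpr hdet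
  have ha : (a : ℂ) ≠ 0 := by exact_mod_cast ne_of_gt ha0
  set Ab : Matrix (Fin 2) (Fin 2) ℂ := A.map (starRingEnd ℂ) with hAb_def
  set K : Matrix (Fin 4) (Fin 4) ℂ := kron A Ab with hK_def
  have hL : Lmat A = ((a : ℂ))⁻¹ • (Tmat * K * Tmatᴴ) := rfl
  have hAbdet : Ab.det = starRingEnd ℂ A.det := by
    rw [hAb_def, ← RingHom.mapMatrix_apply, ← RingHom.map_det]
  have hnorm : A.det * starRingEnd ℂ A.det = (a : ℂ) * (a : ℂ) := by
    rw [Complex.mul_conj]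
    rw [show Complex.normSq A.det = a * a from by rw [← Complex.sq_norm]; ring]
    push_cast; ring
  have hAbb : Ab.map (starRingEnd ℂ) = A := by
    ext i j; simp [hAb_def, Matrix.map_apply]
  -- Tmatᵀ = Pswap * Tmatᴴ
  have hTt2 : Tmatᵀ = Pswap * Tmatᴴ := by
    have h1 := congrArg Matrix.transpose Tmat_conj
    rw [Matrix.transpose_mul, Pswap_transpose, t_map_conj] at h1
    rw [h1, ← Matrix.mul_assoc, Pswap_sq, Matrix.one_mul]
  -- realness (matrix level)
  have hXconj : (Tmat * K * Tmatᴴ).map (starRingEnd ℂ) = Tmat * K * Tmatᴴ := by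
    rw [Matrix.map_mul, Matrix.map_mul, ctmap, hK_def, kron_map, hAbb, Tmat_conj]
    have hs : Pswap * kron Ab A * (Pswap * Tmatᴴ) = kron A Ab * Tmatᴴ := by
      calc Pswap * kron Ab A * (Pswap * Tmatᴴ)
          = (Pswap * kron Ab A * Pswap) * Tmatᴴ := by simp only [Matrix.mul_assoc]
        _ = kron A Ab * Tmatᴴ := by rw [Pswap_kron]
    calc Tmat * Pswap * kron (A.map (starRingEnd ℂ)) A * Tmatᵀ
        = Tmat * (Pswap * kron Ab A * (Pswap * Tmatᴴ)) := by
          rw [hTt2, ← hAb_def]; simp only [Matrix.mul_assoc]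
      _ = Tmat * (kron A Ab * Tmatᴴ) := by rw [hs]
      _ = Tmat * kron A Ab * Tmatᴴ := by simp only [Matrix.mul_assoc]
  have hLconj : (Lmat A).map (starRingEnd ℂ) = Lmat A := by
    rw [hL, map_smul_conj, hXconj,
      show starRingEnd ℂ ((a : ℂ))⁻¹ = ((a : ℂ))⁻¹ from by
        rw [map_inv₀, Complex.conj_ofReal]]
  -- the real matrix
  have hreal : Lmat A = (Matrix.of fun i j => (Lmat A i j).re).map Complex.ofReal := by
    ext i j
    have h := congrFun (congrFun hLconj i) j
    simp only [Matrix.map_apply, Matrix.of_apply] at h ⊢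
    exact (Complex.conj_eq_iff_re.mp h).symm
  refine ⟨Matrix.of fun i j => (Lmat A i j).re, hreal, ?_, ?_, ?_⟩
  case _ =>
    -- metric condition
    have hmid : Tmatᴴ * McX * Tmat.map (starRingEnd ℂ) = kron eps eps := by
      rw [sandwich3, key1, smul_smul]
      norm_num
    have hKe : K * kron eps eps * Kᵀ = ((a:ℂ) * (a:ℂ)) • kron eps eps := by
      rw [hK_def, kron_transpose, kron_mul, kron_mul, eps_conj, eps_conj,
        kron_smul_left, kron_smul_right, smul_smul, hAbdet, hnorm]
    have hmetC : Lmat A * McX * (Lmat A)ᵀ = McX := by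
      calc Lmat A * McX * (Lmat A)ᵀ
          = ((a:ℂ)⁻¹ * (a:ℂ)⁻¹) •
              (Tmat * K * (Tmatᴴ * McX * Tmat.map (starRingEnd ℂ)) * Kᵀ * Tmatᵀ) := by
            rw [hL, Matrix.transpose_smul, Matrix.transpose_mul, Matrix.transpose_mul, ct_t]
            simp only [Matrix.smul_mul, Matrix.mul_smul, smul_smul, Matrix.mul_assoc]
        _ = ((a:ℂ)⁻¹ * (a:ℂ)⁻¹) • (Tmat * (K * kron eps eps * Kᵀ) * Tmatᵀ) := by
            rw [hmid]; simp only [Matrix.mul_assoc]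
        _ = ((a:ℂ)⁻¹ * (a:ℂ)⁻¹) • (((a:ℂ) * (a:ℂ)) • (Tmat * kron eps eps * Tmatᵀ)) := by
            rw [hKe]; simp only [Matrix.smul_mul, Matrix.mul_smul]
        _ = ((a:ℂ)⁻¹ * (a:ℂ)⁻¹ * ((a:ℂ) * (a:ℂ)) * (2⁻¹ * 2)) • McX := by
            rw [sandwich2, key2]; simp only [smul_smul]; ring_nf
        _ = McX := by
            rw [show ((a:ℂ)⁻¹ * (a:ℂ)⁻¹ * ((a:ℂ) * (a:ℂ)) * ((2:ℂ)⁻¹ * 2)) = 1 from by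
              field_simp, one_smul]
    have hmapped : ((Matrix.of fun i j => (Lmat A i j).re) * Mmetric *
        (Matrix.of fun i j => (Lmat A i j).re)ᵀ).map Complex.ofReal =
        Mmetric.map Complex.ofReal := by
      have hmm : ∀ (X Y : Matrix (Fin 4) (Fin 4) ℝ),
          (X * Y).map Complex.ofReal = X.map Complex.ofReal * Y.map Complex.ofReal := by
        intro X Y
        exact Matrix.map_mul (f := Complex.ofRealHom)
      rw [hmm, hmm, Matrix.transpose_map, ← hreal]
      exact hmetC
    ext i j
    have h := congrFun (congrFun hmapped i) j
    simp only [Matrix.map_apply] at h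
    exact_mod_cast h
  case _ =>
    -- determinant
    have hKdet : K.det = A.det ^ 2 * (starRingEnd ℂ A.det) ^ 2 := by
      rw [hK_def, kron_det, hAbdet]
    have hdetC : (Lmat A).det = 1 := by
      rw [hL, Matrix.det_smul, Matrix.det_mul, Matrix.det_mul, Matrix.det_conjTranspose,
        Tmat_det, hKdet]
      rw [show Fintype.card (Fin 4) = 4 from rfl]
      rw [show star I = -I from Complex.conj_I]
      have h4 : A.det ^ 2 * (starRingEnd ℂ A.det) ^ 2 = (a:ℂ) ^ 4 := by
        calc A.det ^ 2 * (starRingEnd ℂ A.det) ^ 2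
            = (A.det * starRingEnd ℂ A.det) ^ 2 := by ring
          _ = ((a:ℂ) * (a:ℂ)) ^ 2 := by rw [hnorm]
          _ = (a:ℂ) ^ 4 := by ring
      rw [h4]
      have hI : I * (a:ℂ) ^ 4 * -I = (a:ℂ) ^ 4 := by
        calc I * (a:ℂ) ^ 4 * -I = -(I * I) * (a:ℂ) ^ 4 := by ring
          _ = (a:ℂ) ^ 4 := by rw [Complex.I_mul_I]; ring
      rw [hI]
      field_simp
    have h := RingHom.map_det Complex.ofRealHom (Matrix.of fun i j => (Lmat A i j).re)
    rw [RingHom.mapMatrix_apply] at h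
    have h2 : (((Matrix.of fun i j => (Lmat A i j).re).det : ℝ) : ℂ) = 1 := by
      rw [show ((Complex.ofRealHom : ℝ →+* ℂ) : ℝ → ℂ) = Complex.ofReal from rfl] at h
      rw [h, ← hreal, hdetC]
    exact_mod_cast h2
  case _ =>
    -- positivity of the (0,0) entry
    have h00 : Lmat A 0 0 = ((a⁻¹ * 2⁻¹ * (Complex.normSq (A 0 0) + Complex.normSq (A 0 1) +
        Complex.normSq (A 1 0) + Complex.normSq (A 1 1)) : ℝ) : ℂ) := by
      rw [hL, sandwich1, hK_def, hAb_def, kron_eq]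
      simp only [Matrix.smul_apply, smul_eq_mul, Matrix.mul_apply, Fin.sum_univ_four,
        Matrix.conjTranspose_apply, Matrix.map_apply, T0, Matrix.cons_val_zero,
        Matrix.cons_val_one, Matrix.vecHead, Matrix.vecTail, Matrix.cons_val',
        Matrix.empty_val', Matrix.cons_val_fin_one]
      norm_num
      rw [Complex.mul_conj, Complex.mul_conj, Complex.mul_conj, Complex.mul_conj]
      push_cast
      simp only [map_zero, map_one, mul_zero, zero_mul, add_zero, mul_one]
      ring
    have hS : 0 < Complex.normSq (A 0 0) + Complex.normSq (A 0 1) +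
        Complex.normSq (A 1 0) + Complex.normSq (A 1 1) := by
      by_contra hcon
      push_neg at hcon
      have n0 := Complex.normSq_nonneg (A 0 0)
      have n1 := Complex.normSq_nonneg (A 0 1)
      have n2 := Complex.normSq_nonneg (A 1 0)
      have n3 := Complex.normSq_nonneg (A 1 1)
      have e0 : A 0 0 = 0 := Complex.normSq_eq_zero.mp (by nlinarith)
      have e1 : A 0 1 = 0 := Complex.normSq_eq_zero.mp (by nlinarith)
      have e2 : A 1 0 = 0 := Complex.normSq_eq_zero.mp (by nlinarith)
      have e3 : A 1 1 = 0 := Complex.normSq_eq_zero.mp (by nlinarith)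
      apply hdet
      rw [Matrix.det_fin_two, e0, e1, e2, e3]
      ring
    have : (Matrix.of fun i j => (Lmat A i j).re) 0 0 = a⁻¹ * 2⁻¹ *
        (Complex.normSq (A 0 0) + Complex.normSq (A 0 1) +
         Complex.normSq (A 1 0) + Complex.normSq (A 1 1)) := by
      simp only [Matrix.of_apply, h00, Complex.ofReal_re]
    rw [this]
    have hainv : 0 < a⁻¹ := inv_pos.mpr ha0
    positivity
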